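/- Let m, n, k, l be positive integers with ml − nk = 1 and p ≥ 2, and define φ(t) = (t−1)^{pm} t^{−n}, ψ(t) = (t−1)^{pk} t^{−l}. Then the map ξ = (φ, ψ) : ℂ* → ℂ² is injective. -/
import Mathlib

private lemma key_identity (m n k l p : ℕ)
    (hdet : (m : ℤ) * l - (n : ℤ) * k = 1)
    (t : ℂ) (ht0 : t ≠ 0) (ht1 : t - 1 ≠ 0) :
    ((t - 1) ^ (p * m) * t ^ (-(n : ℤ))) ^ (k : ℤ) *
      ((t - 1) ^ (p * k) * t ^ (-(l : ℤ))) ^ (-(m : ℤ)) = t := by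
  rw [mul_zpow, mul_zpow, ← zpow_natCast (t - 1) (p * m), ← zpow_natCast (t - 1) (p * k),
    ← zpow_mul, ← zpow_mul, ← zpow_mul, ← zpow_mul,
    mul_mul_mul_comm, ← zpow_add₀ ht1, ← zpow_add₀ ht0]
  have h1 : ((p * m : ℕ) : ℤ) * k + ((p * k : ℕ) : ℤ) * (-(m : ℤ)) = 0 := by
    push_cast; ring
  have h2 : (-(n : ℤ)) * k + (-(l : ℤ)) * (-(m : ℤ)) = 1 := by linarith
  rw [h1, h2, zpow_zero, zpow_one, one_mul]

/-- For positive integers `m, n, k, l` with `ml − nk = 1` and `p ≥ 2`,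
the map `ξ(t) = ((t−1)^{pm} t^{−n}, (t−1)^{pk} t^{−l})` is injective on `ℂ*`
(series (m) of the Main Theorem). -/
theorem series_m_injective (m n k l p : ℕ)
    (hm : 0 < m) (hn : 0 < n) (hk : 0 < k) (hl : 0 < l) (hp : 2 ≤ p)
    (hdet : (m : ℤ) * l - (n : ℤ) * k = 1) :
    Set.InjOn
      (fun t : ℂ => ((t - 1) ^ (p * m) * t ^ (-(n : ℤ)),
                     (t - 1) ^ (p * k) * t ^ (-(l : ℤ))))
      {t : ℂ | t ≠ 0} := by
  intro s hs t ht heq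
  simp only [Set.mem_setOf_eq] at hs ht
  have h1 : (s - 1) ^ (p * m) * s ^ (-(n : ℤ)) = (t - 1) ^ (p * m) * t ^ (-(n : ℤ)) :=
    congrArg Prod.fst heq
  have h2 : (s - 1) ^ (p * k) * s ^ (-(l : ℤ)) = (t - 1) ^ (p * k) * t ^ (-(l : ℤ)) :=
    congrArg Prod.snd heq
  have hpm : 0 < p * m := Nat.mul_pos (by omega) hm
  by_cases hs1 : s - 1 = 0
  · -- s = 1, so φ s = 0, hence (t-1)^{pm} = 0, so t = 1
    rw [hs1, zero_pow hpm.ne', zero_mul] at h1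
    have := (mul_eq_zero.mp h1.symm).resolve_right (zpow_ne_zero _ ht)
    have ht1 : t - 1 = 0 := pow_eq_zero_iff hpm.ne' |>.mp this
    have hseq : s = 1 := by linear_combination hs1
    have hteq : t = 1 := by linear_combination ht1
    rw [hseq, hteq]
  · by_cases ht1 : t - 1 = 0
    · rw [ht1, zero_pow hpm.ne', zero_mul] at h1
      have := (mul_eq_zero.mp h1).resolve_right (zpow_ne_zero _ hs)
      exact absurd (pow_eq_zero_iff hpm.ne' |>.mp this) hs1
    · have := key_identity m n k l p hdet s hs hs1
      rw [h1, h2, key_identity m n k l p hdet t ht ht1] at this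
      exact this.symm
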